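/- arXiv:2303.03861 — 2 statements merged into one kernel-verified Lean document; each statement's English description precedes it below -/
import Mathlib

section
/- Let V be a vector space over a field, W a subspace, and S(W) a subsemigroup of L(W). Then L_{S(W)}(V) is a completely regular semigroup if and only if S(W) is completely regular and either (i) W = V, or (ii) dim(V/W) = 1 and S(W) is a subgroup of Aut(W). -/
open Set

/-- `S` is a subsemigroup of `L(M)` (closed under composition). -/
def LIsSubsemigroup {K M : Type*} [Field K] [AddCommGroup M] [Module K M]
    (S : Set (M →ₗ[K] M)) : Prop :=
  ∀ a ∈ S, ∀ b ∈ S, a ∘ₗ b ∈ S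

/-- `S` is a subgroup of `Aut(M)`. -/
def LIsSubgroupOfAut {K M : Type*} [Field K] [AddCommGroup M] [Module K M]
    (S : Set (M →ₗ[K] M)) : Prop :=
  LIsSubsemigroup S ∧ (∀ a ∈ S, Function.Bijective a) ∧ (LinearMap.id ∈ S) ∧
    ∀ a ∈ S, ∃ b ∈ S, a ∘ₗ b = LinearMap.id ∧ b ∘ₗ a = LinearMap.id

/-- `S` is a regular semigroup of linear maps: `∀ a ∈ S, ∃ b ∈ S, aba = a`
(composed left to right, i.e. `x ↦ a (b (a x))`). -/
def LIsRegularOn {K M : Type*} [Field K] [AddCommGroup M] [Module K M]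
    (S : Set (M →ₗ[K] M)) : Prop :=
  ∀ a ∈ S, ∃ b ∈ S, a ∘ₗ b ∘ₗ a = a

/-- `S` is an inverse semigroup of linear maps. -/
def LIsInverseOn {K M : Type*} [Field K] [AddCommGroup M] [Module K M]
    (S : Set (M →ₗ[K] M)) : Prop :=
  ∀ a ∈ S, ∃! b, b ∈ S ∧ a ∘ₗ b ∘ₗ a = a ∧ b ∘ₗ a ∘ₗ b = b

/-- `u` is a unit of the linear monoid `S`. -/
def LIsUnitOn {K M : Type*} [Field K] [AddCommGroup M] [Module K M]
    (S : Set (M →ₗ[K] M)) (u : M →ₗ[K] M) : Prop :=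
  u ∈ S ∧ ∃ v ∈ S, u ∘ₗ v = LinearMap.id ∧ v ∘ₗ u = LinearMap.id

/-- `a` is a unit-regular element of `S`. -/
def LUnitRegularElem {K M : Type*} [Field K] [AddCommGroup M] [Module K M]
    (S : Set (M →ₗ[K] M)) (a : M →ₗ[K] M) : Prop :=
  ∃ u, LIsUnitOn S u ∧ a ∘ₗ u ∘ₗ a = a

/-- `S` is a unit-regular linear monoid. -/
def LIsUnitRegularOn {K M : Type*} [Field K] [AddCommGroup M] [Module K M]
    (S : Set (M →ₗ[K] M)) : Prop :=
  ∀ a ∈ S, LUnitRegularElem S a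

/-- `G` is a subgroup contained in the semigroup `S` of linear maps. -/
def LIsSubgroupIn {K M : Type*} [Field K] [AddCommGroup M] [Module K M]
    (S G : Set (M →ₗ[K] M)) : Prop :=
  G ⊆ S ∧ (∀ a ∈ G, ∀ b ∈ G, a ∘ₗ b ∈ G) ∧
    ∃ e ∈ G, (∀ a ∈ G, a ∘ₗ e = a ∧ e ∘ₗ a = a) ∧
      ∀ a ∈ G, ∃ b ∈ G, a ∘ₗ b = e ∧ b ∘ₗ a = e

/-- `S` is a completely regular semigroup of linear maps: every element
belongs to a subgroup of `S`. -/
def LIsCompletelyRegularOn {K M : Type*} [Field K] [AddCommGroup M] [Module K M]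
    (S : Set (M →ₗ[K] M)) : Prop :=
  ∀ a ∈ S, ∃ G, LIsSubgroupIn S G ∧ a ∈ G

/-- The semigroup `L_{S(W)}(V)` of all linear self-maps of `V` that leave `W`
invariant and whose restriction to `W` lies in `S`. -/
def LSemi {K V : Type*} [Field K] [AddCommGroup V] [Module K V] (W : Submodule K V)
    (S : Set (W →ₗ[K] W)) : Set (V →ₗ[K] V) :=
  {f | ∃ h : ∀ x ∈ W, f x ∈ W, f.restrict h ∈ S}

/-!
Fix a linear retraction `π : V → W`. Lifting `t ↦ ι ∘ t ∘ π` is multiplicative from `S` into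
`L_{S(W)}(V)`, and compressing `f ↦ π ∘ f ∘ ι` is multiplicative on `L_{S(W)}(V)` with image in
`S`, so subgroups can be pushed in both directions.

An element `f` of a completely regular semigroup has a commuting inner inverse, so `f (f x) = 0`
forces `f x = 0`. When `W ≠ V`, testing this on the maps `x ↦ s (π x) + ψ (x + W) • c` for
`s ∈ S`, functionals `ψ` on `V / W` and vectors `c` shows that every `s ∈ S` is bijective and
that `V / W` is a line. The identity of a subgroup of `S` is then a bijective idempotent, so it
is `id`, and `S` is a group.

Conversely, if `W = V` every element of `L_{S(W)}(V)` is a lift. In codimension one an `f`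
mapping `V` into `W` is the lift of `f|W` along the retraction with kernel `ker f`, and any
other `f` induces a nonzero, hence bijective, endomorphism of the line `V / W`, so together
with the bijectivity of `f|W` it is a unit of `L_{S(W)}(V)`.
-/

open Function Module

section LinearMonoid

variable {K M N : Type*} [Field K] [AddCommGroup M] [Module K M] [AddCommGroup N] [Module K N]

theorem LIsSubgroupIn.image {T : Set (M →ₗ[K] M)} {S : Set (N →ₗ[K] N)} {G : Set (M →ₗ[K] M)}
    (hG : LIsSubgroupIn T G) (φ : (M →ₗ[K] M) → (N →ₗ[K] N)) (hφT : MapsTo φ T S)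
    (hφ : ∀ f ∈ T, ∀ g ∈ T, φ (f ∘ₗ g) = φ f ∘ₗ φ g) :
    LIsSubgroupIn S (φ '' G) := by
  obtain ⟨hGT, hGmul, e, heG, he, hinv⟩ := hG
  refine ⟨(image_mono hGT).trans (image_subset_iff.2 hφT), ?_, φ e, mem_image_of_mem φ heG,
    ?_, ?_⟩
  · rintro _ ⟨f, hf, rfl⟩ _ ⟨g, hg, rfl⟩
    exact ⟨f ∘ₗ g, hGmul f hf g hg, hφ f (hGT hf) g (hGT hg)⟩
  · rintro _ ⟨f, hf, rfl⟩
    rw [← hφ f (hGT hf) e (hGT heG), ← hφ e (hGT heG) f (hGT hf), (he f hf).1, (he f hf).2]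
    exact ⟨rfl, rfl⟩
  · rintro _ ⟨f, hf, rfl⟩
    obtain ⟨g, hg, hfg, hgf⟩ := hinv f hf
    exact ⟨φ g, mem_image_of_mem φ hg, by rw [← hφ f (hGT hf) g (hGT hg), hfg],
      by rw [← hφ g (hGT hg) f (hGT hf), hgf]⟩

theorem lIsSubgroupIn_setOf_lIsUnitOn {T : Set (M →ₗ[K] M)} (hT : LIsSubsemigroup T)
    (hid : LinearMap.id ∈ T) : LIsSubgroupIn T {f | LIsUnitOn T f} := by
  refine ⟨fun f hf => hf.1, ?_, LinearMap.id, ⟨hid, LinearMap.id, hid, rfl, rfl⟩,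
    fun f _ => ⟨f.comp_id, f.id_comp⟩, ?_⟩
  · rintro f ⟨hf, g, hg, hfg, hgf⟩ f' ⟨hf', g', hg', hfg', hgf'⟩
    refine ⟨hT f hf f' hf', g' ∘ₗ g, hT g' hg' g hg, ?_, ?_⟩
    · rw [LinearMap.comp_assoc, ← LinearMap.comp_assoc g, hfg', LinearMap.id_comp, hfg]
    · rw [LinearMap.comp_assoc, ← LinearMap.comp_assoc f', hgf, LinearMap.id_comp, hgf']
  · rintro f ⟨hf, g, hg, hfg, hgf⟩
    exact ⟨g, ⟨hg, f, hf, hgf, hfg⟩, hfg, hgf⟩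

theorem LIsSubgroupOfAut.lIsSubgroupIn_self {S : Set (M →ₗ[K] M)} (hS : LIsSubgroupOfAut S) :
    LIsSubgroupIn S S :=
  ⟨subset_rfl, hS.1, LinearMap.id, hS.2.2.1, fun f _ => ⟨f.comp_id, f.id_comp⟩, hS.2.2.2⟩

theorem LIsCompletelyRegularOn.exists_commute_inner_inverse {T : Set (M →ₗ[K] M)}
    (hT : LIsCompletelyRegularOn T) {f : M →ₗ[K] M} (hf : f ∈ T) :
    ∃ h ∈ T, f ∘ₗ h ∘ₗ f = f ∧ f ∘ₗ h = h ∘ₗ f := by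
  obtain ⟨G, ⟨hGT, -, e, -, he, hinv⟩, hfG⟩ := hT f hf
  obtain ⟨h, hhG, hfh, hhf⟩ := hinv f hfG
  exact ⟨h, hGT hhG, by rw [hhf, (he f hfG).1], hfh.trans hhf.symm⟩

theorem apply_eq_zero_of_apply_apply_eq_zero {f h : M →ₗ[K] M} (hfhf : f ∘ₗ h ∘ₗ f = f)
    (hfh : f ∘ₗ h = h ∘ₗ f) {x : M} (hx : f (f x) = 0) : f x = 0 :=
  calc f x = f (h (f x)) := (LinearMap.congr_fun hfhf x).symm
    _ = h (f (f x)) := LinearMap.congr_fun hfh (f x)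
    _ = 0 := by rw [hx, map_zero]

theorem eq_id_of_comp_self_of_injective {e : M →ₗ[K] M} (he : e ∘ₗ e = e) (hinj : Injective e) :
    e = LinearMap.id :=
  LinearMap.ext fun x => hinj (LinearMap.congr_fun he x)

theorem lIsSubgroupOfAut_of_bijective {S : Set (M →ₗ[K] M)} (hS : LIsSubsemigroup S)
    (hSne : S.Nonempty) (hcr : LIsCompletelyRegularOn S) (hbij : ∀ s ∈ S, Bijective s) :
    LIsSubgroupOfAut S := by
  have hinv : ∀ s ∈ S, ∃ b ∈ S, s ∘ₗ b = LinearMap.id ∧ b ∘ₗ s = LinearMap.id := by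
    intro s hs
    obtain ⟨G, ⟨hGS, -, e, heG, he, hinvG⟩, hsG⟩ := hcr s hs
    obtain rfl : e = LinearMap.id :=
      eq_id_of_comp_self_of_injective (he e heG).1 (hbij e (hGS heG)).1
    obtain ⟨b, hbG, hsb, hbs⟩ := hinvG s hsG
    exact ⟨b, hGS hbG, hsb, hbs⟩
  obtain ⟨s, hs⟩ := hSne
  obtain ⟨b, hb, hsb, -⟩ := hinv s hs
  exact ⟨hS, hbij, hsb ▸ hS s hs b hb, hinv⟩

end LinearMonoid

section LinearAlgebra

variable {K M Q : Type*} [Field K] [AddCommGroup M] [Module K M] [AddCommGroup Q] [Module K Q]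

theorem rank_eq_one_of_forall_dual_apply_eq_zero {q₀ : Q} (hq₀ : q₀ ≠ 0)
    (h : ∀ ψ : Dual K Q, ψ q₀ = 0 → ψ = 0) : Module.rank K Q = 1 := by
  refine rank_eq_one q₀ hq₀ fun z => ?_
  by_contra hz
  obtain ⟨ψ, hψz, hψ⟩ := Submodule.exists_dual_map_eq_bot_of_notMem
    (p := K ∙ q₀) (x := z) (fun hmem => hz (Submodule.mem_span_singleton.mp hmem)) inferInstance
  have hψq₀ : ψ q₀ = 0 := by
    simpa [hψ] using Submodule.mem_map_of_mem (f := ψ) (Submodule.mem_span_singleton_self q₀)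
  exact hψz (by rw [h ψ hψq₀, LinearMap.zero_apply])

theorem bijective_of_rank_eq_one (hQ : Module.rank K Q = 1) {f : Q →ₗ[K] Q} (hf : f ≠ 0) :
    Bijective f := by
  obtain ⟨c, rfl, -⟩ := f.existsUnique_eq_smul_id_of_finrank_eq_one
    (rank_eq_one_iff_finrank_eq_one.mp hQ)
  have hc : c ≠ 0 := by rintro rfl; exact hf (zero_smul K _)
  exact (LinearEquiv.smulOfNeZero K Q c hc).bijective

theorem bijective_of_bijective_restrict_of_bijective_mapQ {p : Submodule K M} {f : M →ₗ[K] M}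
    (hf : ∀ x ∈ p, f x ∈ p) (hres : Bijective (f.restrict hf))
    (hquot : Bijective (p.mapQ p f fun x hx => hf x hx)) : Bijective f := by
  constructor
  · refine (injective_iff_map_eq_zero f).2 fun z hz => ?_
    have hzp : z ∈ p := by
      rw [← Submodule.Quotient.mk_eq_zero, ← hquot.1.eq_iff, map_zero, Submodule.mapQ_apply, hz,
        Submodule.Quotient.mk_zero]
    have := hres.1 (a₁ := ⟨z, hzp⟩) (a₂ := 0) (Subtype.ext (by simpa using hz))
    exact congrArg Subtype.val this
  · intro y
    obtain ⟨q, hq⟩ := hquot.2 (Submodule.Quotient.mk y)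
    obtain ⟨x, rfl⟩ := Submodule.Quotient.mk_surjective p q
    rw [Submodule.mapQ_apply, Submodule.Quotient.eq] at hq
    obtain ⟨w, hw⟩ := hres.2 ⟨_, p.neg_mem hq⟩
    refine ⟨x + w, ?_⟩
    rw [map_add, ← LinearMap.coe_restrict_apply hf, hw]
    simp

end LinearAlgebra

section LSemi

variable {K V : Type*} [Field K] [AddCommGroup V] [Module K V] {W : Submodule K V}
  {S : Set (W →ₗ[K] W)}

theorem lIsSubsemigroup_LSemi (hS : LIsSubsemigroup S) : LIsSubsemigroup (LSemi W S) := by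
  rintro a ⟨ha, haS⟩ b ⟨hb, hbS⟩
  exact ⟨fun x hx => ha _ (hb x hx), hS _ haS _ hbS⟩

theorem id_mem_LSemi (hid : LinearMap.id ∈ S) : LinearMap.id ∈ LSemi W S :=
  ⟨fun _ hx => hx, hid⟩

variable (W) in
theorem Submodule.exists_retraction : ∃ π : V →ₗ[K] W, ∀ w : W, π w = w :=
  let ⟨π, hπ⟩ := W.subtype.exists_leftInverse_of_injective W.ker_subtype
  ⟨π, LinearMap.congr_fun hπ⟩

variable {π : V →ₗ[K] W}

theorem restrict_eq_comp_comp_subtype (hπ : ∀ w : W, π w = w) {f : V →ₗ[K] V}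
    (hf : ∀ x ∈ W, f x ∈ W) : f.restrict hf = π ∘ₗ f ∘ₗ W.subtype :=
  LinearMap.ext fun w => (hπ ⟨f w, hf w w.2⟩).symm

theorem comp_comp_subtype_comp_of_mem_LSemi (hπ : ∀ w : W, π w = w) {f g : V →ₗ[K] V}
    (hf : f ∈ LSemi W S) (hg : g ∈ LSemi W S) :
    π ∘ₗ (f ∘ₗ g) ∘ₗ W.subtype = (π ∘ₗ f ∘ₗ W.subtype) ∘ₗ (π ∘ₗ g ∘ₗ W.subtype) := by
  obtain ⟨hf, -⟩ := hf
  obtain ⟨hg, -⟩ := hg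
  rw [← restrict_eq_comp_comp_subtype hπ hf, ← restrict_eq_comp_comp_subtype hπ hg,
    ← restrict_eq_comp_comp_subtype hπ fun x hx => hf (g x) (hg x hx)]
  rfl

theorem subtype_comp_comp_mem_LSemi (hπ : ∀ w : W, π w = w) {t : W →ₗ[K] W} (ht : t ∈ S) :
    W.subtype ∘ₗ t ∘ₗ π ∈ LSemi W S := by
  have hmaps : ∀ x ∈ W, (W.subtype ∘ₗ t ∘ₗ π) x ∈ W := fun x _ => (t (π x)).2
  refine ⟨hmaps, ?_⟩
  rw [restrict_eq_comp_comp_subtype hπ]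
  convert ht
  ext w
  simp [hπ]

theorem subtype_comp_comp_comp (hπ : ∀ w : W, π w = w) (t u : W →ₗ[K] W) :
    (W.subtype ∘ₗ t ∘ₗ π) ∘ₗ (W.subtype ∘ₗ u ∘ₗ π) = W.subtype ∘ₗ (t ∘ₗ u) ∘ₗ π := by
  ext x
  simp [hπ]

theorem subtype_comp_restrict_comp {a : V →ₗ[K] V} (haW : ∀ x ∈ W, a x ∈ W)
    (ha : ∀ x, a (π x) = a x) : W.subtype ∘ₗ a.restrict haW ∘ₗ π = a :=
  LinearMap.ext ha

theorem LIsCompletelyRegularOn.of_LSemi (hT : LIsCompletelyRegularOn (LSemi W S)) :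
    LIsCompletelyRegularOn S := by
  obtain ⟨π, hπ⟩ := W.exists_retraction
  intro s hs
  obtain ⟨G, hG, hsG⟩ := hT _ (subtype_comp_comp_mem_LSemi hπ hs)
  refine ⟨_, hG.image (fun f => π ∘ₗ f ∘ₗ W.subtype) (fun f ⟨hf, hfS⟩ => ?_)
    (fun f hf g hg => comp_comp_subtype_comp_of_mem_LSemi hπ hf hg), _, hsG, ?_⟩
  · show π ∘ₗ f ∘ₗ W.subtype ∈ S
    rwa [← restrict_eq_comp_comp_subtype hπ hf]
  · ext w
    simp [hπ]

theorem exists_lIsSubgroupIn_LSemi_of_mem (hπ : ∀ w : W, π w = w) {G : Set (W →ₗ[K] W)}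
    (hG : LIsSubgroupIn S G) {t : W →ₗ[K] W} (ht : t ∈ G) :
    ∃ G', LIsSubgroupIn (LSemi W S) G' ∧ W.subtype ∘ₗ t ∘ₗ π ∈ G' :=
  ⟨_, hG.image (fun t => W.subtype ∘ₗ t ∘ₗ π) (fun _ ht => subtype_comp_comp_mem_LSemi hπ ht)
    (fun t _ u _ => (subtype_comp_comp_comp hπ t u).symm), mem_image_of_mem _ ht⟩

theorem lIsCompletelyRegularOn_LSemi_top {S : Set (↥(⊤ : Submodule K V) →ₗ[K] ↥(⊤ : Submodule K V))}
    (hS : LIsCompletelyRegularOn S) : LIsCompletelyRegularOn (LSemi ⊤ S) := by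
  obtain ⟨π, hπ⟩ := (⊤ : Submodule K V).exists_retraction
  rintro a ⟨haW, hres⟩
  obtain ⟨G, hG, haG⟩ := hS _ hres
  rw [← subtype_comp_restrict_comp haW fun x => congrArg a (congrArg Subtype.val (hπ ⟨x, trivial⟩))]
  exact exists_lIsSubgroupIn_LSemi_of_mem hπ hG haG

theorem exists_lIsSubgroupIn_LSemi_of_forall_apply_mem (hAut : LIsSubgroupOfAut S) {a : V →ₗ[K] V}
    (haW : ∀ x ∈ W, a x ∈ W) (hres : a.restrict haW ∈ S) (hrange : ∀ x, a x ∈ W) :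
    ∃ G, LIsSubgroupIn (LSemi W S) G ∧ a ∈ G := by
  let e := LinearEquiv.ofBijective _ (hAut.2.1 _ hres)
  let π := e.symm.toLinearMap ∘ₗ a.codRestrict W hrange
  have hπ : ∀ w : W, π w = w := e.symm_apply_apply
  have ha : ∀ x, a (π x) = a x := fun x =>
    congrArg Subtype.val (e.apply_symm_apply (a.codRestrict W hrange x))
  rw [← subtype_comp_restrict_comp haW ha]
  exact exists_lIsSubgroupIn_LSemi_of_mem hπ hAut.lIsSubgroupIn_self hres

theorem lIsUnitOn_LSemi (hAut : LIsSubgroupOfAut S) {a : V →ₗ[K] V} (haW : ∀ x ∈ W, a x ∈ W)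
    (hres : a.restrict haW ∈ S) (hbij : Bijective a) : LIsUnitOn (LSemi W S) a := by
  obtain ⟨b, hbS, hab, -⟩ := hAut.2.2.2 _ hres
  let e := LinearEquiv.ofBijective a hbij
  have hgW : ∀ x ∈ W, e.symm x ∈ W := fun x hx => by
    obtain ⟨w, hw⟩ := (hAut.2.1 _ hres).2 ⟨x, hx⟩
    have hx : x = e w := congrArg Subtype.val hw.symm
    rw [hx, e.symm_apply_apply]
    exact w.2
  have hg : e.symm.toLinearMap.restrict hgW = b := by
    ext1 w
    apply (hAut.2.1 _ hres).1
    rw [← LinearMap.comp_apply (a.restrict haW) b, hab]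
    exact Subtype.ext (e.apply_symm_apply w)
  exact ⟨⟨haW, hres⟩, e.symm, ⟨hgW, hg ▸ hbS⟩, LinearMap.ext e.apply_symm_apply,
    LinearMap.ext e.symm_apply_apply⟩

theorem lIsCompletelyRegularOn_LSemi_of_rank_quotient_eq_one
    (hrk : Module.rank K (V ⧸ W) = 1) (hAut : LIsSubgroupOfAut S) :
    LIsCompletelyRegularOn (LSemi W S) := by
  rintro a ⟨haW, hres⟩
  by_cases hrange : ∀ x, a x ∈ W
  · exact exists_lIsSubgroupIn_LSemi_of_forall_apply_mem hAut haW hres hrange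
  obtain ⟨x₀, hx₀⟩ := not_forall.mp hrange
  have hquot : Bijective (W.mapQ W a fun x hx => haW x hx) :=
    bijective_of_rank_eq_one hrk fun h => hx₀ <| by
      simpa using LinearMap.congr_fun h (Submodule.Quotient.mk x₀)
  have hbij := bijective_of_bijective_restrict_of_bijective_mapQ haW (hAut.2.1 _ hres) hquot
  exact ⟨_, lIsSubgroupIn_setOf_lIsUnitOn (lIsSubsemigroup_LSemi hAut.1)
    (id_mem_LSemi hAut.2.2.1), lIsUnitOn_LSemi hAut haW hres hbij⟩

theorem exists_eq_zero_mkQ_eq (hπ : ∀ w : W, π w = w) (q : V ⧸ W) :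
    ∃ v, π v = 0 ∧ W.mkQ v = q := by
  obtain ⟨v, rfl⟩ := W.mkQ_surjective q
  exact ⟨v - π v, by simp [hπ], by simp⟩

variable (π) in
def extendAddRankOne (s : W →ₗ[K] W) (ψ : Dual K (V ⧸ W)) (c : V) : V →ₗ[K] V :=
  W.subtype ∘ₗ s ∘ₗ π + (ψ ∘ₗ W.mkQ).smulRight c

variable {s : W →ₗ[K] W} {ψ : Dual K (V ⧸ W)} {c : V}

theorem extendAddRankOne_apply_coe (hπ : ∀ w : W, π w = w) (w : W) :
    extendAddRankOne π s ψ c w = s w := by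
  simp [extendAddRankOne, hπ, (Submodule.Quotient.mk_eq_zero W).2 w.2]

theorem extendAddRankOne_apply_of_eq_zero {x : V} (hx : π x = 0) :
    extendAddRankOne π s ψ c x = ψ (W.mkQ x) • c := by
  simp [extendAddRankOne, hx]

theorem extendAddRankOne_mem_LSemi (hπ : ∀ w : W, π w = w) (hs : s ∈ S) :
    extendAddRankOne π s ψ c ∈ LSemi W S := by
  have hmaps : ∀ x ∈ W, extendAddRankOne π s ψ c x ∈ W := fun x hx => by
    simp [extendAddRankOne_apply_coe hπ ⟨x, hx⟩]
  refine ⟨hmaps, ?_⟩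
  convert hs
  ext w
  simp [extendAddRankOne_apply_coe hπ]

theorem injective_of_mem_of_LSemi (hT : LIsCompletelyRegularOn (LSemi W S))
    (hπ : ∀ w : W, π w = w) {v₀ : V} (hv₀ : π v₀ = 0) (hψ : ψ (W.mkQ v₀) = 1) (hs : s ∈ S) :
    Injective s := by
  refine (injective_iff_map_eq_zero s).2 fun w hw => ?_
  obtain ⟨h, -, hFhF, hFh⟩ :=
    hT.exists_commute_inner_inverse (extendAddRankOne_mem_LSemi (ψ := ψ) (c := w) hπ hs)
  have hFv₀ : extendAddRankOne π s ψ w v₀ = w := by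
    rw [extendAddRankOne_apply_of_eq_zero hv₀, hψ, one_smul]
  have hFv₀_eq_zero := apply_eq_zero_of_apply_apply_eq_zero hFhF hFh (x := v₀)
    (by rw [hFv₀, extendAddRankOne_apply_coe hπ, hw, ZeroMemClass.coe_zero])
  rw [hFv₀] at hFv₀_eq_zero
  exact_mod_cast hFv₀_eq_zero

theorem surjective_of_mem_of_LSemi (hT : LIsCompletelyRegularOn (LSemi W S))
    (hπ : ∀ w : W, π w = w) {v₀ : V} (hv₀ : π v₀ = 0) (hψ : ψ (W.mkQ v₀) = 1) (hs : s ∈ S) :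
    Surjective s := by
  intro w
  obtain ⟨h, ⟨hhW, -⟩, hFhF, -⟩ :=
    hT.exists_commute_inner_inverse (extendAddRankOne_mem_LSemi (ψ := ψ) (c := w) hπ hs)
  have hFv₀ : extendAddRankOne π s ψ w v₀ = w := by
    rw [extendAddRankOne_apply_of_eq_zero hv₀, hψ, one_smul]
  refine ⟨⟨h w, hhW w w.2⟩, Subtype.ext ?_⟩
  calc (s ⟨h w, hhW w w.2⟩ : V) = extendAddRankOne π s ψ w (h w) :=
        (extendAddRankOne_apply_coe hπ _).symm
    _ = extendAddRankOne π s ψ w (h (extendAddRankOne π s ψ w v₀)) := by rw [hFv₀]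
    _ = w := (LinearMap.congr_fun hFhF v₀).trans hFv₀

theorem bijective_of_mem_of_LSemi_of_ne_top (hT : LIsCompletelyRegularOn (LSemi W S))
    (hW : W ≠ ⊤) (hs : s ∈ S) : Bijective s := by
  obtain ⟨π, hπ⟩ := W.exists_retraction
  obtain ⟨v, hv⟩ := SetLike.exists_not_mem_of_ne_top W hW rfl
  obtain ⟨ψ, hψ⟩ := Projective.exists_dual_eq_one K (x := W.mkQ v) (by simpa using hv)
  obtain ⟨v₀, hv₀, hv₀v⟩ := exists_eq_zero_mkQ_eq hπ (W.mkQ v)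
  rw [← hv₀v] at hψ
  exact ⟨injective_of_mem_of_LSemi hT hπ hv₀ hψ hs, surjective_of_mem_of_LSemi hT hπ hv₀ hψ hs⟩

theorem eq_zero_of_apply_eq_zero_of_LSemi (hT : LIsCompletelyRegularOn (LSemi W S))
    (hSne : S.Nonempty) {q : V ⧸ W} (hq : q ≠ 0) (hψq : ψ q = 0) : ψ = 0 := by
  obtain ⟨π, hπ⟩ := W.exists_retraction
  obtain ⟨s, hs⟩ := hSne
  by_contra hψ
  obtain ⟨z, hz⟩ := DFunLike.ne_iff.mp hψ
  obtain ⟨t, hπt, rfl⟩ := exists_eq_zero_mkQ_eq hπ z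
  obtain ⟨c, hπc, rfl⟩ := exists_eq_zero_mkQ_eq hπ q
  let F := extendAddRankOne π s ψ c
  obtain ⟨h, -, hFhF, hFh⟩ := hT.exists_commute_inner_inverse (extendAddRankOne_mem_LSemi hπ hs)
  have hFt : F t = ψ (W.mkQ t) • c := extendAddRankOne_apply_of_eq_zero hπt
  have hFc : F c = 0 := by
    rw [extendAddRankOne_apply_of_eq_zero hπc, hψq, zero_smul]
  have hFFt : F (F t) = 0 := by rw [hFt, map_smul, hFc, smul_zero]
  have hFt_eq_zero := apply_eq_zero_of_apply_apply_eq_zero hFhF hFh hFFt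
  rw [hFt, smul_eq_zero] at hFt_eq_zero
  exact hFt_eq_zero.elim (fun h0 => hz (by simpa using h0)) fun hc => hq (by simp [hc])

theorem rank_quotient_eq_one_of_LSemi (hT : LIsCompletelyRegularOn (LSemi W S))
    (hSne : S.Nonempty) (hW : W ≠ ⊤) : Module.rank K (V ⧸ W) = 1 := by
  obtain ⟨v, hv⟩ := SetLike.exists_not_mem_of_ne_top W hW rfl
  have hq : W.mkQ v ≠ 0 := by simpa using hv
  exact rank_eq_one_of_forall_dual_apply_eq_zero hq fun ψ hψ =>
    eq_zero_of_apply_eq_zero_of_LSemi hT hSne hq hψ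

end LSemi

theorem stmt18 {K V : Type*} [Field K] [AddCommGroup V] [Module K V]
    (W : Submodule K V) (S : Set (W →ₗ[K] W)) (hSne : S.Nonempty)
    (hS : LIsSubsemigroup S) :
    LIsCompletelyRegularOn (LSemi W S) ↔
      (LIsCompletelyRegularOn S ∧
        (W = ⊤ ∨ (Module.rank K (V ⧸ W) = 1 ∧ LIsSubgroupOfAut S))) := by
  constructor
  · intro hT
    have hScr := hT.of_LSemi
    refine ⟨hScr, or_iff_not_imp_left.2 fun hW => ⟨rank_quotient_eq_one_of_LSemi hT hSne hW, ?_⟩⟩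
    exact lIsSubgroupOfAut_of_bijective hS hSne hScr fun s hs =>
      bijective_of_mem_of_LSemi_of_ne_top hT hW hs
  · rintro ⟨hScr, rfl | ⟨hrk, hAut⟩⟩
    · exact lIsCompletelyRegularOn_LSemi_top hScr
    · exact lIsCompletelyRegularOn_LSemi_of_rank_quotient_eq_one hrk hAut
end

section
/- Let V be a vector space over a field. The semigroup L(V) of all linear self-maps of V under composition is completely regular if and only if dim(V) ≤ 1. -/
open Set

/-!
A nonzero square-zero map lies in no subgroup of `L(V)`, since the identity of that subgroup
would be killed by it; such maps exist as soon as `dim V ≥ 2`. If `dim V ≤ 1`, every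
endomorphism is a scalar, hence either `0` (in the group `{0}`) or invertible (in `GL(V)`).
-/

section CompletelyRegular

variable {K V : Type*} [Field K] [AddCommGroup V] [Module K V]

/-- With `b` the inverse of `a` in `G`, its identity is `e = e ∘ e = b ∘ (a ∘ a) ∘ b`. -/
theorem LIsSubgroupIn.eq_zero_of_comp_self_eq_zero {S G : Set (V →ₗ[K] V)}
    (hG : LIsSubgroupIn S G) {a : V →ₗ[K] V} (ha : a ∈ G) (haa : a ∘ₗ a = 0) : a = 0 := by
  obtain ⟨-, -, e, he, hunit, hinv⟩ := hG
  obtain ⟨b, -, hab, hba⟩ := hinv a ha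
  have he_zero : e = 0 :=
    calc e = e ∘ₗ e := ((hunit e he).1).symm
      _ = (b ∘ₗ a) ∘ₗ (a ∘ₗ b) := by rw [hab, hba]
      _ = b ∘ₗ (a ∘ₗ a) ∘ₗ b := rfl
      _ = 0 := by rw [haa, LinearMap.zero_comp, LinearMap.comp_zero]
  rw [← (hunit a ha).1, he_zero, LinearMap.comp_zero]

/-- With `i ≠ j` in a basis, the map sending `B j` to `B i` and the other basis vectors to `0`. -/
theorem exists_ne_zero_comp_self_eq_zero (h : 1 < Module.rank K V) :
    ∃ a : V →ₗ[K] V, a ≠ 0 ∧ a ∘ₗ a = 0 := by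
  let B := Module.Basis.ofVectorSpace K V
  have : Nontrivial (Module.Basis.ofVectorSpaceIndex K V) := by
    rwa [← Cardinal.one_lt_iff_nontrivial, B.mk_eq_rank'']
  obtain ⟨i, j, hij⟩ := exists_pair_ne (Module.Basis.ofVectorSpaceIndex K V)
  refine ⟨(B.coord j).smulRight (B i), fun h0 => B.ne_zero i ?_, ?_⟩
  · simpa using LinearMap.congr_fun h0 (B j)
  · ext x
    simp [hij]

theorem not_linearIndependent_pair_of_rank_le_one (h : Module.rank K V ≤ 1) (v w : V) :
    ¬ LinearIndependent K ![v, w] := fun hvw => by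
  simpa using hvw.cardinal_lift_le_rank.trans (Cardinal.lift_le.mpr h)

theorem eq_zero_or_bijective_of_rank_le_one (h : Module.rank K V ≤ 1) (a : V →ₗ[K] V) :
    a = 0 ∨ Function.Bijective a := by
  obtain ⟨c, rfl⟩ := LinearMap.exists_eq_smul_id_of_forall_notLinearIndependent
    fun v => not_linearIndependent_pair_of_rank_le_one h v (a v)
  by_cases hc : c = 0
  · simp [hc]
  · exact Or.inr (LinearEquiv.smulOfNeZero K V c hc).bijective

theorem lIsSubgroupIn_univ_singleton_zero : LIsSubgroupIn univ ({0} : Set (V →ₗ[K] V)) := by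
  refine ⟨subset_univ _, ?_, 0, rfl, ?_, ?_⟩
  · rintro _ rfl _ rfl
    rfl
  · rintro _ rfl
    simp
  · rintro _ rfl
    exact ⟨0, rfl, by simp⟩

theorem lIsSubgroupIn_univ_setOf_bijective :
    LIsSubgroupIn univ {f : V →ₗ[K] V | Function.Bijective f} := by
  refine ⟨subset_univ _, fun f hf g hg => hf.comp hg, LinearMap.id, Function.bijective_id,
    fun f _ => ⟨LinearMap.comp_id f, LinearMap.id_comp f⟩, fun f hf => ?_⟩
  let E := LinearEquiv.ofBijective f hf
  exact ⟨E.symm, E.symm.bijective, LinearMap.ext E.apply_symm_apply,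
    LinearMap.ext E.symm_apply_apply⟩

end CompletelyRegular

theorem stmt19 {K V : Type*} [Field K] [AddCommGroup V] [Module K V] :
    LIsCompletelyRegularOn (Set.univ : Set (V →ₗ[K] V)) ↔
      Module.rank K V ≤ 1 := by
  constructor
  · intro hcr
    by_contra! hrank
    obtain ⟨a, ha, haa⟩ := exists_ne_zero_comp_self_eq_zero hrank
    obtain ⟨G, hG, haG⟩ := hcr a (mem_univ a)
    exact ha (hG.eq_zero_of_comp_self_eq_zero haG haa)
  · intro hrank a _
    rcases eq_zero_or_bijective_of_rank_le_one hrank a with rfl | ha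
    · exact ⟨{0}, lIsSubgroupIn_univ_singleton_zero, rfl⟩
    · exact ⟨_, lIsSubgroupIn_univ_setOf_bijective, ha⟩
end
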